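/- In the standing setup, for 1-cells X ∈ C₁(a,b) and Y ∈ C₁(c,a), define p_{X,Y} ∈ End(x_b ⊠ F(X) ⊠ F(Y) ⊠ x̄_c) by p_{X,Y} := (ε_b ⊠ id) ∘ (id_{x_b} ⊠ γ^{(b)*} ⊠ id_{F(X)⊠F(Y)⊠x̄_c}) ∘ (id_{x_b} ⊠ ψ_X* ⊠ id_{F(Y)⊠x̄_c}) ∘ (id_{x_b⊠F(X)} ⊠ ψ_Y* ⊠ id_{x̄_c}) ∘ (id_{x_b⊠F(X)⊠F(Y)} ⊠ γ^{(c)} ⊠ id_{x̄_c}) ∘ (id_{x_b⊠F(X)⊠F(Y)⊠x̄_c} ⊠ ε_c*). Then (id_{x_b} ⊠ F²_{X,Y} ⊠ id_{x̄_c}) ∘ p_{X,Y} = p_{X⊠Y} ∘ (id_{x_b} ⊠ F²_{X,Y} ⊠ id_{x̄_c}). -/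

import Mathlib

/-!
Self-contained background for formalizing results from
"Q-system completion of C*-2-categories of 2-functors".

We model a strict C*-2-category as a (Mathlib) bicategory which is `Bicategory.Strict`,
together with a `CStarStruct`: a star operation and a norm on 2-cells, compatible with
the vertical composition and the horizontal whiskerings.
-/

open CategoryTheory CategoryTheory.Bicategory

universe w₁ v₁ u₁ w₂ v₂ u₂

/-- A C*-structure on a bicategory: each hom-category is a C*-category.  We record the
star operation and the norm on 2-cells together with their compatibilities. -/
class CStarStruct (B : Type u₁) [Bicategory.{w₁, v₁} B] where
  star : ∀ {a b : B} {f g : a ⟶ b}, (f ⟶ g) → (g ⟶ f)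
  nrm : ∀ {a b : B} {f g : a ⟶ b}, (f ⟶ g) → ℝ
  star_star : ∀ {a b : B} {f g : a ⟶ b} (η : f ⟶ g), star (star η) = η
  star_id : ∀ {a b : B} (f : a ⟶ b), star (𝟙 f) = 𝟙 f
  star_comp : ∀ {a b : B} {f g h : a ⟶ b} (η : f ⟶ g) (θ : g ⟶ h),
    star (η ≫ θ) = star θ ≫ star η
  star_whiskerLeft : ∀ {a b c : B} (f : a ⟶ b) {g h : b ⟶ c} (η : g ⟶ h),
    star (f ◁ η) = f ◁ star η
  star_whiskerRight : ∀ {a b c : B} {f g : a ⟶ b} (η : f ⟶ g) (h : b ⟶ c),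
    star (η ▷ h) = star η ▷ h
  nrm_nonneg : ∀ {a b : B} {f g : a ⟶ b} (η : f ⟶ g), 0 ≤ nrm η
  nrm_star : ∀ {a b : B} {f g : a ⟶ b} (η : f ⟶ g), nrm (star η) = nrm η
  nrm_comp_le : ∀ {a b : B} {f g h : a ⟶ b} (η : f ⟶ g) (θ : g ⟶ h),
    nrm (η ≫ θ) ≤ nrm η * nrm θ
  nrm_cstar : ∀ {a b : B} {f g : a ⟶ b} (η : f ⟶ g),
    nrm (η ≫ star η) = nrm η * nrm η

section Basics

variable {B : Type u₁} [Bicategory.{w₁, v₁} B] [CStarStruct B]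

/-- The star (adjoint) of a 2-cell. -/
abbrev star2 {a b : B} {f g : a ⟶ b} (η : f ⟶ g) : g ⟶ f := CStarStruct.star η

/-- The norm of a 2-cell. -/
abbrev norm2 {a b : B} {f g : a ⟶ b} (η : f ⟶ g) : ℝ := CStarStruct.nrm η

/-- A 2-cell `u : f ⟶ g` is unitary if `u u* = id` and `u* u = id`
(composites written diagrammatically). -/
def IsUnitary {a b : B} {f g : a ⟶ b} (u : f ⟶ g) : Prop :=
  u ≫ star2 u = 𝟙 f ∧ star2 u ≫ u = 𝟙 g

/-- A projection 2-cell: `p² = p = p*`. -/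
def IsProjection {a b : B} {f : a ⟶ b} (p : f ⟶ f) : Prop :=
  p ≫ p = p ∧ star2 p = p

end Basics

/-- A C*-2-category is locally orthogonal projection complete if every projection
2-cell `p` on a 1-cell `f` splits as `p = v v*` with `v` an isometry (`v* v = id`). -/
def LocProjComplete (B : Type u₁) [Bicategory.{w₁, v₁} B] [CStarStruct B] : Prop :=
  ∀ {a b : B} (f : a ⟶ b) (p : f ⟶ f), IsProjection p →
    ∃ (g : a ⟶ b) (v : g ⟶ f), v ≫ star2 v = 𝟙 g ∧ star2 v ≫ v = p

section QSystems

variable {B : Type u₁} [Bicategory.{w₁, v₁} B] [CStarStruct B]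

/-- The Q-system axioms for a 1-cell `Q : b ⟶ b` with multiplication `m` and unit `i`:
associativity, (left and right) unitality, the Frobenius condition (both versions)
and separability. -/
def IsQSystem {b : B} (Q : b ⟶ b) (m : Q ≫ Q ⟶ Q) (i : 𝟙 b ⟶ Q) : Prop :=
  ((m ▷ Q) ≫ m = (α_ Q Q Q).hom ≫ (Q ◁ m) ≫ m) ∧
  ((i ▷ Q) ≫ m = (λ_ Q).hom) ∧
  ((Q ◁ i) ≫ m = (ρ_ Q).hom) ∧
  (m ≫ star2 m = (star2 m ▷ Q) ≫ (α_ Q Q Q).hom ≫ (Q ◁ m)) ∧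
  (m ≫ star2 m = (Q ◁ star2 m) ≫ (α_ Q Q Q).inv ≫ (m ▷ Q)) ∧
  (star2 m ≫ m = 𝟙 Q)

/-- `(x, xb)` is a dual pair with evaluation `ε` and coevaluation `η` satisfying the
zig-zag identities, and the duality is unitarily separable: `ε ∘ ε* = id`. -/
def IsUnitarySepDual {e c : B} (x : e ⟶ c) (xb : c ⟶ e)
    (ε' : xb ≫ x ⟶ 𝟙 c) (η : 𝟙 e ⟶ x ≫ xb) : Prop :=
  ((λ_ x).inv ≫ (η ▷ x) ≫ (α_ x xb x).hom ≫ (x ◁ ε') ≫ (ρ_ x).hom = 𝟙 x) ∧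
  ((ρ_ xb).inv ≫ (xb ◁ η) ≫ (α_ xb x xb).inv ≫ (ε' ▷ xb) ≫ (λ_ xb).hom = 𝟙 xb) ∧
  (star2 ε' ≫ ε' = 𝟙 (𝟙 c))

/-- The canonical multiplication `id ⊠ ε ⊠ id` on the 1-cell `x ≫ xb` determined
by a dual pair. -/
def dualMult {e c : B} (x : e ⟶ c) (xb : c ⟶ e) (ε' : xb ≫ x ⟶ 𝟙 c) :
    (x ≫ xb) ≫ (x ≫ xb) ⟶ x ≫ xb :=
  (α_ x xb (x ≫ xb)).hom ≫ (x ◁ ((α_ xb x xb).inv ≫ (ε' ▷ xb) ≫ (λ_ xb).hom))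

/-- The canonical comultiplication `id ⊠ ε* ⊠ id` on the 1-cell `x ≫ xb` determined
by a dual pair. -/
def comultOf {e c : B} (x : e ⟶ c) (xb : c ⟶ e) (ε' : xb ≫ x ⟶ 𝟙 c) :
    x ≫ xb ⟶ (x ≫ xb) ≫ (x ≫ xb) :=
  (x ◁ ((λ_ xb).inv ≫ (star2 ε' ▷ xb) ≫ (α_ xb x xb).hom)) ≫ (α_ x xb (x ≫ xb)).inv

/-- `u` is an isomorphism of Q-systems `(Q, m, i) ≅ (Q', m', i')`: a unitary 2-cell
intertwining the multiplications and the units. -/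
def IsQSysIso {b : B} {Q Q' : b ⟶ b} (m : Q ≫ Q ⟶ Q) (i : 𝟙 b ⟶ Q)
    (m' : Q' ≫ Q' ⟶ Q') (i' : 𝟙 b ⟶ Q') (u : Q ⟶ Q') : Prop :=
  IsUnitary u ∧ (m ≫ u = ((u ▷ Q) ≫ (Q' ◁ u)) ≫ m') ∧ (i ≫ u = i')

/-- A Q-system `(Q, m, i)` splits if it is isomorphic, as a Q-system, to `X ⊠ X̄`
for a 1-cell `X` admitting a unitarily separable dual. -/
def QSystemSplits {b : B} (Q : b ⟶ b) (m : Q ≫ Q ⟶ Q) (i : 𝟙 b ⟶ Q) : Prop :=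
  ∃ (c : B) (x : b ⟶ c) (xb : c ⟶ b) (ε' : xb ≫ x ⟶ 𝟙 c) (η : 𝟙 b ⟶ x ≫ xb),
    IsUnitarySepDual x xb ε' η ∧
    ∃ u : Q ⟶ x ≫ xb, IsQSysIso m i (dualMult x xb ε') η u

end QSystems

/-- A C*-2-category is Q-system complete iff every Q-system in it splits
(by [CPJP, Theorem 3.36] this is equivalent to the canonical inclusion into the
Q-system completion being a *-equivalence). -/
def QSystemComplete (B : Type u₁) [Bicategory.{w₁, v₁} B] [CStarStruct B] : Prop :=
  ∀ (b : B) (Q : b ⟶ b) (m : Q ≫ Q ⟶ Q) (i : 𝟙 b ⟶ Q),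
    IsQSystem Q m i → QSystemSplits Q m i

/-! ### The C*-2-category `Fun(C, D)` of *-2-functors -/

/-- The data of a 2-functor between bicategories: action on 0-, 1-, 2-cells,
tensorators and unitors. -/
structure TwoFunctorData (C : Type u₁) (D : Type u₂)
    [Bicategory.{w₁, v₁} C] [Bicategory.{w₂, v₂} D] where
  obj : C → D
  map : ∀ {a b : C}, (a ⟶ b) → (obj a ⟶ obj b)
  map2 : ∀ {a b : C} {X Y : a ⟶ b}, (X ⟶ Y) → (map X ⟶ map Y)
  tensorator : ∀ {a b c : C} (X : a ⟶ b) (Y : b ⟶ c), map X ≫ map Y ⟶ map (X ≫ Y)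
  unitor : ∀ a : C, 𝟙 (obj a) ⟶ map (𝟙 a)

section Fun

variable {C : Type u₁} {D : Type u₂}
variable [Bicategory.{w₁, v₁} C] [Bicategory.Strict C] [CStarStruct C]
variable [Bicategory.{w₂, v₂} D] [Bicategory.Strict D] [CStarStruct D]

/-- `F` is a *-2-functor: functorial on hom-categories, star-preserving, with unitary
natural tensorators and unitors satisfying the associativity and unitality coherences. -/
def IsStarTwoFunctor (F : TwoFunctorData C D) : Prop :=
  (∀ {a b : C} (X : a ⟶ b), F.map2 (𝟙 X) = 𝟙 (F.map X)) ∧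
  (∀ {a b : C} {X Y Z : a ⟶ b} (f : X ⟶ Y) (g : Y ⟶ Z),
      F.map2 (f ≫ g) = F.map2 f ≫ F.map2 g) ∧
  (∀ {a b : C} {X Y : a ⟶ b} (f : X ⟶ Y), F.map2 (star2 f) = star2 (F.map2 f)) ∧
  (∀ {a b c : C} (X : a ⟶ b) (Y : b ⟶ c), IsUnitary (F.tensorator X Y)) ∧
  (∀ a : C, IsUnitary (F.unitor a)) ∧
  (∀ {a b c : C} {X X' : a ⟶ b} {Y Y' : b ⟶ c} (f : X ⟶ X') (g : Y ⟶ Y'),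
      ((F.map2 f ▷ F.map Y) ≫ (F.map X' ◁ F.map2 g)) ≫ F.tensorator X' Y'
        = F.tensorator X Y ≫ F.map2 ((f ▷ Y) ≫ (X' ◁ g))) ∧
  (∀ {a b c d : C} (X : a ⟶ b) (Y : b ⟶ c) (Z : c ⟶ d),
      (F.tensorator X Y ▷ F.map Z) ≫ F.tensorator (X ≫ Y) Z ≫ F.map2 (α_ X Y Z).hom
        = (α_ (F.map X) (F.map Y) (F.map Z)).hom ≫ (F.map X ◁ F.tensorator Y Z)
            ≫ F.tensorator X (Y ≫ Z)) ∧
  (∀ {a b : C} (X : a ⟶ b),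
      (F.unitor a ▷ F.map X) ≫ F.tensorator (𝟙 a) X ≫ F.map2 (λ_ X).hom
        = (λ_ (F.map X)).hom) ∧
  (∀ {a b : C} (X : a ⟶ b),
      (F.map X ◁ F.unitor b) ≫ F.tensorator X (𝟙 b) ≫ F.map2 (ρ_ X).hom
        = (ρ_ (F.map X)).hom)

/-- The data of a 2-transformation `φ : F ⇒ G`: 1-cells `φ_a : F(a) ⟶ G(a)` and
2-cells `φ_X : F(X) ⊠ φ_b ⟶ φ_a ⊠ G(X)` (written diagrammatically). -/
structure TransfData (F G : TwoFunctorData C D) where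
  app : ∀ a : C, F.obj a ⟶ G.obj a
  natur : ∀ {a b : C} (X : a ⟶ b), F.map X ≫ app b ⟶ app a ≫ G.map X

/-- `φ` is a *-2-transformation: each `φ_X` is unitary, natural in `X`, and coherent
with the tensorators and unitors of `F` and `G`. -/
def IsStarTwoTransf {F G : TwoFunctorData C D} (φ : TransfData F G) : Prop :=
  (∀ {a b : C} (X : a ⟶ b), IsUnitary (φ.natur X)) ∧
  (∀ {a b : C} {X Y : a ⟶ b} (f : X ⟶ Y),
      (F.map2 f ▷ φ.app b) ≫ φ.natur Y = φ.natur X ≫ (φ.app a ◁ G.map2 f)) ∧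
  (∀ {a b c : C} (X : a ⟶ b) (Y : b ⟶ c),
      (F.tensorator X Y ▷ φ.app c) ≫ φ.natur (X ≫ Y)
        = (α_ (F.map X) (F.map Y) (φ.app c)).hom ≫ (F.map X ◁ φ.natur Y)
          ≫ (α_ (F.map X) (φ.app b) (G.map Y)).inv ≫ (φ.natur X ▷ G.map Y)
          ≫ (α_ (φ.app a) (G.map X) (G.map Y)).hom ≫ (φ.app a ◁ G.tensorator X Y)) ∧
  (∀ a : C,
      (F.unitor a ▷ φ.app a) ≫ φ.natur (𝟙 a)
        = (λ_ (φ.app a)).hom ≫ (ρ_ (φ.app a)).inv ≫ (φ.app a ◁ G.unitor a))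

/-- The data of a 2-modification: a family of 2-cells `η_a : φ_a ⟶ ψ_a`. -/
abbrev ModifData {F G : TwoFunctorData C D} (φ ψ : TransfData F G) :=
  ∀ a : C, φ.app a ⟶ ψ.app a

/-- `η` is a 2-modification `φ ⇛ ψ`: uniformly bounded components intertwining the
half-braidings `φ_X`, `ψ_X`. -/
def IsModification {F G : TwoFunctorData C D} (φ ψ : TransfData F G)
    (η : ModifData φ ψ) : Prop :=
  (∃ M : ℝ, ∀ a : C, norm2 (η a) ≤ M) ∧
  (∀ {a b : C} (X : a ⟶ b),
      (F.map X ◁ η b) ≫ ψ.natur X = φ.natur X ≫ (η a ▷ G.map X))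

/-- Horizontal composition of 2-transformations (the tensor product `ψ ⊗ φ` of
1-cells of `Fun(C,D)`, written diagrammatically). -/
def hcompT {F G H : TwoFunctorData C D} (φ : TransfData F G) (χ : TransfData G H) :
    TransfData F H where
  app a := φ.app a ≫ χ.app a
  natur {a b} X :=
    (α_ (F.map X) (φ.app b) (χ.app b)).inv ≫ (φ.natur X ▷ χ.app b)
      ≫ (α_ (φ.app a) (G.map X) (χ.app b)).hom ≫ (φ.app a ◁ χ.natur X)
      ≫ (α_ (φ.app a) (χ.app a) (H.map X)).inv

/-- The identity 2-transformation `1_F`. -/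
def idT (F : TwoFunctorData C D) : TransfData F F where
  app a := 𝟙 (F.obj a)
  natur {a b} X := (ρ_ (F.map X)).hom ≫ (λ_ (F.map X)).inv

/-- A Q-system in `End(F) ⊆ Fun(C,D)`: a *-2-transformation `ψ : F ⇒ F` with
multiplication and unit 2-modifications whose components form Q-systems in `D`. -/
def IsFunQSystem (F : TwoFunctorData C D) (ψ : TransfData F F)
    (m : ModifData (hcompT ψ ψ) ψ) (i : ModifData (idT F) ψ) : Prop :=
  IsStarTwoTransf ψ ∧ IsModification (hcompT ψ ψ) ψ m ∧ IsModification (idT F) ψ i ∧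
  ∀ a : C, IsQSystem (ψ.app a) (m a) (i a)

/-- A Q-system `(ψ, m, i)` in `End(F)` splits in `Fun(C,D)`: there are a *-2-functor `G`,
*-2-transformations `φ : F ⇒ G`, `φ̄ : G ⇒ F` forming a unitarily separable dual pair
(with evaluation and coevaluation 2-modifications), and a unitary 2-modification
`γ : φ̄ ⊗ φ ⇛ ψ` which is an isomorphism of Q-systems. -/
def FunQSystemSplits (F : TwoFunctorData C D) (ψ : TransfData F F)
    (m : ModifData (hcompT ψ ψ) ψ) (i : ModifData (idT F) ψ) : Prop :=
  ∃ (G : TwoFunctorData C D), IsStarTwoFunctor G ∧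
  ∃ (φ : TransfData F G) (φb : TransfData G F),
    IsStarTwoTransf φ ∧ IsStarTwoTransf φb ∧
  ∃ (ev : ∀ a : C, φb.app a ≫ φ.app a ⟶ 𝟙 (G.obj a))
    (coev : ∀ a : C, 𝟙 (F.obj a) ⟶ φ.app a ≫ φb.app a),
    IsModification (hcompT φb φ) (idT G) ev ∧
    IsModification (idT F) (hcompT φ φb) coev ∧
    (∀ a : C, IsUnitarySepDual (φ.app a) (φb.app a) (ev a) (coev a)) ∧
    ∃ (γ : ∀ a : C, φ.app a ≫ φb.app a ⟶ ψ.app a),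
      IsModification (hcompT φ φb) ψ γ ∧
      ∀ a : C, IsQSysIso (dualMult (φ.app a) (φb.app a) (ev a)) (coev a)
        (m a) (i a) (γ a)

end Fun

/-- The C*-2-category `Fun(C,D)` is Q-system complete: every Q-system in it splits. -/
def FunQSystemComplete (C : Type u₁) (D : Type u₂)
    [Bicategory.{w₁, v₁} C] [Bicategory.Strict C] [CStarStruct C]
    [Bicategory.{w₂, v₂} D] [Bicategory.Strict D] [CStarStruct D] : Prop :=
  ∀ (F : TwoFunctorData C D), IsStarTwoFunctor F →
  ∀ (ψ : TransfData F F) (m : ModifData (hcompT ψ ψ) ψ) (i : ModifData (idT F) ψ),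
    IsFunQSystem F ψ m i → FunQSystemSplits F ψ m i

/-- The C*-2-category `Fun(C,D)` is locally orthogonal projection complete: every
projection 2-modification splits by an isometric 2-modification. -/
def FunLocProjComplete (C : Type u₁) (D : Type u₂)
    [Bicategory.{w₁, v₁} C] [Bicategory.Strict C] [CStarStruct C]
    [Bicategory.{w₂, v₂} D] [Bicategory.Strict D] [CStarStruct D] : Prop :=
  ∀ (F G : TwoFunctorData C D), IsStarTwoFunctor F → IsStarTwoFunctor G →
  ∀ (φ : TransfData F G), IsStarTwoTransf φ →
  ∀ (p : ModifData φ φ), IsModification φ φ p → (∀ a : C, IsProjection (p a)) →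
  ∃ (χ : TransfData F G), IsStarTwoTransf χ ∧
  ∃ (v : ModifData χ φ), IsModification χ φ v ∧
    (∀ a : C, v a ≫ star2 (v a) = 𝟙 (χ.app a)) ∧ (∀ a : C, star2 (v a) ≫ v a = p a)

/-! ### The standing setup

`C`, `D` are strict C*-2-categories, `D` is Q-system complete, `F : C → D` is a
*-2-functor and `(ψ, m, i)` is a Q-system in `End_{Fun(C,D)}(F)`; for each 0-cell `a`
of `C` we fix a splitting of the Q-system `ψ_a` in `D`: a 0-cell `c_a`, a 1-cell
`x_a : F(a) ⟶ c_a` with unitarily separable dual `x̄_a`, evaluation `ε_a`,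
coevaluation `η_a`, and a unitary `γ⁽ᵃ⁾ : x̄_a ⊠ x_a ⟶ ψ_a` intertwining the
multiplications and units. -/
structure Setup (C : Type u₁) (D : Type u₂)
    [Bicategory.{w₁, v₁} C] [Bicategory.Strict C] [CStarStruct C]
    [Bicategory.{w₂, v₂} D] [Bicategory.Strict D] [CStarStruct D] where
  locC : LocProjComplete C
  locD : LocProjComplete D
  complD : QSystemComplete D
  F : TwoFunctorData C D
  hF : IsStarTwoFunctor F
  ψ : TransfData F F
  hψ : IsStarTwoTransf ψ
  m : ModifData (hcompT ψ ψ) ψ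
  i : ModifData (idT F) ψ
  hm : IsModification (hcompT ψ ψ) ψ m
  hi : IsModification (idT F) ψ i
  hQ : ∀ a : C, IsQSystem (ψ.app a) (m a) (i a)
  cc : C → D
  x : ∀ a : C, F.obj a ⟶ cc a
  xb : ∀ a : C, cc a ⟶ F.obj a
  ε' : ∀ a : C, xb a ≫ x a ⟶ 𝟙 (cc a)
  η : ∀ a : C, 𝟙 (F.obj a) ⟶ x a ≫ xb a
  hdual : ∀ a : C, IsUnitarySepDual (x a) (xb a) (ε' a) (η a)
  γ : ∀ a : C, x a ≫ xb a ⟶ ψ.app a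
  hγu : ∀ a : C, IsUnitary (γ a)
  hγm : ∀ a : C,
    dualMult (x a) (xb a) (ε' a) ≫ γ a
      = ((γ a ▷ (x a ≫ xb a)) ≫ (ψ.app a ◁ γ a)) ≫ m a
  hγi : ∀ a : C, η a ≫ γ a = i a

namespace Setup

variable {C : Type u₁} {D : Type u₂}
variable [Bicategory.{w₁, v₁} C] [Bicategory.Strict C] [CStarStruct C]
variable [Bicategory.{w₂, v₂} D] [Bicategory.Strict D] [CStarStruct D]

/-- The 2-cell `p_X ∈ End(x_b ⊠ F(X) ⊠ x̄_a)`, namely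
`(ε_b ⊠ id) ∘ (id ⊠ γ⁽ᵇ⁾* ⊠ id) ∘ (id ⊠ ψ_X* ⊠ id) ∘ (id ⊠ γ⁽ᵃ⁾ ⊠ id) ∘ (id ⊠ ε_a*)`. -/
def p (S : Setup C D) {a b : C} (X : a ⟶ b) :
    S.xb a ≫ S.F.map X ≫ S.x b ⟶ S.xb a ≫ S.F.map X ≫ S.x b :=
  (λ_ (S.xb a ≫ S.F.map X ≫ S.x b)).inv
    ≫ (star2 (S.ε' a) ▷ (S.xb a ≫ S.F.map X ≫ S.x b))
    ≫ (α_ (S.xb a) (S.x a) (S.xb a ≫ S.F.map X ≫ S.x b)).hom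
    ≫ (S.xb a ◁ (α_ (S.x a) (S.xb a) (S.F.map X ≫ S.x b)).inv)
    ≫ (S.xb a ◁ (S.γ a ▷ (S.F.map X ≫ S.x b)))
    ≫ (S.xb a ◁ (α_ (S.ψ.app a) (S.F.map X) (S.x b)).inv)
    ≫ (S.xb a ◁ (star2 (S.ψ.natur X) ▷ S.x b))
    ≫ (S.xb a ◁ (α_ (S.F.map X) (S.ψ.app b) (S.x b)).hom)
    ≫ (S.xb a ◁ (S.F.map X ◁ (star2 (S.γ b) ▷ S.x b)))
    ≫ (S.xb a ◁ (S.F.map X ◁ (α_ (S.x b) (S.xb b) (S.x b)).hom))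
    ≫ (S.xb a ◁ (S.F.map X ◁ (S.x b ◁ S.ε' b)))
    ≫ (S.xb a ◁ (S.F.map X ◁ (ρ_ (S.x b)).hom))

/-- The 2-cell `p_{X,Y} ∈ End(x_b ⊠ F(X) ⊠ F(Y) ⊠ x̄_c)` obtained like `p_X` but
passing `ψ` through both `F(X)` and `F(Y)`. -/
def p2 (S : Setup C D) {a b c : C} (X : a ⟶ b) (Y : b ⟶ c) :
    S.xb a ≫ S.F.map X ≫ S.F.map Y ≫ S.x c
      ⟶ S.xb a ≫ S.F.map X ≫ S.F.map Y ≫ S.x c :=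
  (λ_ (S.xb a ≫ S.F.map X ≫ S.F.map Y ≫ S.x c)).inv
    ≫ (star2 (S.ε' a) ▷ (S.xb a ≫ S.F.map X ≫ S.F.map Y ≫ S.x c))
    ≫ (α_ (S.xb a) (S.x a) (S.xb a ≫ S.F.map X ≫ S.F.map Y ≫ S.x c)).hom
    ≫ (S.xb a ◁ (α_ (S.x a) (S.xb a) (S.F.map X ≫ S.F.map Y ≫ S.x c)).inv)
    ≫ (S.xb a ◁ (S.γ a ▷ (S.F.map X ≫ S.F.map Y ≫ S.x c)))
    ≫ (S.xb a ◁ (α_ (S.ψ.app a) (S.F.map X) (S.F.map Y ≫ S.x c)).inv)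
    ≫ (S.xb a ◁ (star2 (S.ψ.natur X) ▷ (S.F.map Y ≫ S.x c)))
    ≫ (S.xb a ◁ (α_ (S.F.map X) (S.ψ.app b) (S.F.map Y ≫ S.x c)).hom)
    ≫ (S.xb a ◁ (S.F.map X ◁ (α_ (S.ψ.app b) (S.F.map Y) (S.x c)).inv))
    ≫ (S.xb a ◁ (S.F.map X ◁ (star2 (S.ψ.natur Y) ▷ S.x c)))
    ≫ (S.xb a ◁ (S.F.map X ◁ (α_ (S.F.map Y) (S.ψ.app c) (S.x c)).hom))
    ≫ (S.xb a ◁ (S.F.map X ◁ (S.F.map Y ◁ (star2 (S.γ c) ▷ S.x c))))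
    ≫ (S.xb a ◁ (S.F.map X ◁ (S.F.map Y ◁ (α_ (S.x c) (S.xb c) (S.x c)).hom)))
    ≫ (S.xb a ◁ (S.F.map X ◁ (S.F.map Y ◁ (S.x c ◁ S.ε' c))))
    ≫ (S.xb a ◁ (S.F.map X ◁ (S.F.map Y ◁ (ρ_ (S.x c)).hom)))

end Setup

/-- A choice, for every 1-cell `X` of `C`, of a splitting `u_X : G(X) ⟶ x_b ⊠ F(X) ⊠ x̄_a`
of the projection `p_X` (possible since `D` is locally orthogonal projection complete),
normalized on identity 1-cells as in the paper: `G(1_a) = 1_{c_a}` and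
`u_{1_a} = (id ⊠ F¹_a ⊠ id) ∘ ε_a*`. -/
structure GData {C : Type u₁} {D : Type u₂}
    [Bicategory.{w₁, v₁} C] [Bicategory.Strict C] [CStarStruct C]
    [Bicategory.{w₂, v₂} D] [Bicategory.Strict D] [CStarStruct D]
    (S : Setup C D) where
  G1 : ∀ {a b : C}, (a ⟶ b) → (S.cc a ⟶ S.cc b)
  u : ∀ {a b : C} (X : a ⟶ b), G1 X ⟶ S.xb a ≫ S.F.map X ≫ S.x b
  hu_isometry : ∀ {a b : C} (X : a ⟶ b), u X ≫ star2 (u X) = 𝟙 (G1 X)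
  hu_proj : ∀ {a b : C} (X : a ⟶ b), star2 (u X) ≫ u X = S.p X
  hG1_id : ∀ a : C, G1 (𝟙 a) = 𝟙 (S.cc a)
  hu_id : ∀ a : C,
    u (𝟙 a) = eqToHom (hG1_id a) ≫ star2 (S.ε' a)
      ≫ (S.xb a ◁ ((λ_ (S.x a)).inv ≫ (S.F.unitor a ▷ S.x a)))

namespace GData

variable {C : Type u₁} {D : Type u₂}
variable [Bicategory.{w₁, v₁} C] [Bicategory.Strict C] [CStarStruct C]
variable [Bicategory.{w₂, v₂} D] [Bicategory.Strict D] [CStarStruct D]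
variable {S : Setup C D}

/-- `G` on 2-cells: `G(f) := u_Y* ∘ (id ⊠ F(f) ⊠ id) ∘ u_X`. -/
def Gmap2 (E : GData S) {a b : C} {X Y : a ⟶ b} (f : X ⟶ Y) : E.G1 X ⟶ E.G1 Y :=
  E.u X ≫ (S.xb a ◁ (S.F.map2 f ▷ S.x b)) ≫ star2 (E.u Y)

/-- The tensorator of `G`:
`G²_{X,Y} := u_{X⊠Y}* ∘ (id ⊠ F² ⊠ id) ∘ (id ⊠ η* ⊠ id) ∘ (u_X ⊠ u_Y)`. -/
def Gtensor (E : GData S) {a b c : C} (X : a ⟶ b) (Y : b ⟶ c) :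
    E.G1 X ≫ E.G1 Y ⟶ E.G1 (X ≫ Y) :=
  (E.u X ▷ E.G1 Y)
    ≫ ((S.xb a ≫ S.F.map X ≫ S.x b) ◁ E.u Y)
    ≫ (α_ (S.xb a) (S.F.map X ≫ S.x b) (S.xb b ≫ S.F.map Y ≫ S.x c)).hom
    ≫ (S.xb a ◁ (α_ (S.F.map X) (S.x b) (S.xb b ≫ S.F.map Y ≫ S.x c)).hom)
    ≫ (S.xb a ◁ (S.F.map X ◁ (α_ (S.x b) (S.xb b) (S.F.map Y ≫ S.x c)).inv))
    ≫ (S.xb a ◁ (S.F.map X ◁ (star2 (S.η b) ▷ (S.F.map Y ≫ S.x c))))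
    ≫ (S.xb a ◁ (S.F.map X ◁ (λ_ (S.F.map Y ≫ S.x c)).hom))
    ≫ (S.xb a ◁ (α_ (S.F.map X) (S.F.map Y) (S.x c)).inv)
    ≫ (S.xb a ◁ (S.F.tensorator X Y ▷ S.x c))
    ≫ star2 (E.u (X ≫ Y))

/-- The full 2-functor data of `G`. -/
def toFunctor (E : GData S) : TwoFunctorData C D where
  obj a := S.cc a
  map X := E.G1 X
  map2 f := E.Gmap2 f
  tensorator X Y := E.Gtensor X Y
  unitor a := eqToHom (E.hG1_id a).symm

/-- The components of the 2-transformation `φ : F ⇒ G`: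
`φ_X := (u_X* ⊠ id_{x_a}) ∘ (id ⊠ η_a)`. -/
def φnat (E : GData S) {a b : C} (X : a ⟶ b) :
    S.F.map X ≫ S.x b ⟶ S.x a ≫ E.G1 X :=
  (λ_ (S.F.map X ≫ S.x b)).inv
    ≫ (S.η a ▷ (S.F.map X ≫ S.x b))
    ≫ (α_ (S.x a) (S.xb a) (S.F.map X ≫ S.x b)).hom
    ≫ (S.x a ◁ star2 (E.u X))

/-- The components of the 2-transformation `φ̄ : G ⇒ F`:
`φ̄_X := (η_b* ⊠ id) ∘ (id_{x̄_b} ⊠ u_X)`. -/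
def φbnat (E : GData S) {a b : C} (X : a ⟶ b) :
    E.G1 X ≫ S.xb b ⟶ S.xb a ≫ S.F.map X :=
  (E.u X ▷ S.xb b)
    ≫ (α_ (S.xb a) (S.F.map X ≫ S.x b) (S.xb b)).hom
    ≫ (S.xb a ◁ (α_ (S.F.map X) (S.x b) (S.xb b)).hom)
    ≫ (S.xb a ◁ (S.F.map X ◁ star2 (S.η b)))
    ≫ (S.xb a ◁ (ρ_ (S.F.map X)).hom)

/-- The 2-transformation `φ : F ⇒ G`, with `φ_a := x_a`. -/
def φT (E : GData S) : TransfData S.F E.toFunctor where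
  app a := S.x a
  natur {a b} X := E.φnat X

/-- The 2-transformation `φ̄ : G ⇒ F`, with `φ̄_a := x̄_a`. -/
def φbT (E : GData S) : TransfData E.toFunctor S.F where
  app a := S.xb a
  natur {a b} X := E.φbnat X

end GData

/-!
Both `p_{X,Y}` and `p_{X⊠Y}` are compressions `x̄ ⊠ θ ⊠ x` of an adjoint half-braiding `θ`
of `ψ` (inserting `ψ_a` on the left through `ε_a*` and `γ⁽ᵃ⁾`, removing `ψ_c` on the right
through `γ⁽ᶜ⁾*` and `ε_c`): of `ψ_X* · ψ_Y*` and of `ψ_{X⊠Y}*` respectively. Compression is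
natural in the middle 1-cell for any 2-cell intertwining the half-braidings, and the
coherence of `ψ` with the tensorator of `F`, taken adjoint and combined with unitarity of
`F²_{X,Y}`, says exactly that `F²_{X,Y}` intertwines `ψ_X* · ψ_Y*` with `ψ_{X⊠Y}*`.
-/

section StarCoherence

variable {B : Type u₂} [Bicategory.{w₂, v₂} B] [CStarStruct B]

theorem star2_eqToHom {a b : B} {f g : a ⟶ b} (h : f = g) :
    star2 (eqToHom h) = eqToHom h.symm := by
  subst h
  exact CStarStruct.star_id f

theorem star2_associator_hom [Bicategory.Strict B] {a b c d : B} (f : a ⟶ b) (g : b ⟶ c)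
    (h : c ⟶ d) :
    star2 (α_ f g h).hom = (α_ f g h).inv := by
  simp [Bicategory.Strict.associator_eqToIso, star2_eqToHom]

theorem star2_associator_inv [Bicategory.Strict B] {a b c d : B} (f : a ⟶ b) (g : b ⟶ c)
    (h : c ⟶ d) :
    star2 (α_ f g h).inv = (α_ f g h).hom := by
  simp [Bicategory.Strict.associator_eqToIso, star2_eqToHom]

end StarCoherence

namespace TransfData

variable {C : Type u₁} {D : Type u₂}
variable [Bicategory.{w₁, v₁} C] [Bicategory.Strict C]
variable [Bicategory.{w₂, v₂} D] [Bicategory.Strict D] [CStarStruct D]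
variable {F G : TwoFunctorData C D}

def starNaturPair (φ : TransfData F G) {a b c : C} (X : a ⟶ b) (Y : b ⟶ c) :
    φ.app a ≫ G.map X ≫ G.map Y ⟶ (F.map X ≫ F.map Y) ≫ φ.app c :=
  (α_ (φ.app a) (G.map X) (G.map Y)).inv ≫ (star2 (φ.natur X) ▷ G.map Y)
    ≫ (α_ (F.map X) (φ.app b) (G.map Y)).hom ≫ (F.map X ◁ star2 (φ.natur Y))
    ≫ (α_ (F.map X) (F.map Y) (φ.app c)).inv

theorem whiskerLeft_tensorator_comp_star_natur (φ : TransfData F G) (hφ : IsStarTwoTransf φ)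
    {a b c : C} (X : a ⟶ b) (Y : b ⟶ c) (hF : IsUnitary (F.tensorator X Y))
    (hG : IsUnitary (G.tensorator X Y)) :
    (φ.app a ◁ G.tensorator X Y) ≫ star2 (φ.natur (X ≫ Y))
      = φ.starNaturPair X Y ≫ (F.tensorator X Y ▷ φ.app c) := by
  have coh := congrArg star2 (hφ.2.2.1 X Y)
  simp only [CStarStruct.star_comp, CStarStruct.star_whiskerLeft,
    CStarStruct.star_whiskerRight, star2_associator_hom, star2_associator_inv,
    Category.assoc] at coh
  calc (φ.app a ◁ G.tensorator X Y) ≫ star2 (φ.natur (X ≫ Y))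
      = (φ.app a ◁ G.tensorator X Y) ≫ star2 (φ.natur (X ≫ Y))
          ≫ (star2 (F.tensorator X Y) ▷ φ.app c) ≫ (F.tensorator X Y ▷ φ.app c) := by
        rw [← comp_whiskerRight, hF.2, id_whiskerRight, Category.comp_id]
    _ = φ.starNaturPair X Y ≫ (F.tensorator X Y ▷ φ.app c) := by
        rw [reassoc_of% coh, ← whiskerLeft_comp_assoc, hG.1, whiskerLeft_id, Category.id_comp]
        simp only [starNaturPair, Category.assoc]

end TransfData

namespace Setup

variable {C : Type u₁} {D : Type u₂}
variable [Bicategory.{w₁, v₁} C] [Bicategory.Strict C] [CStarStruct C]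
variable [Bicategory.{w₂, v₂} D] [Bicategory.Strict D] [CStarStruct D]
variable (S : Setup C D)

def insertψ {a : C} {d e : D} (M : S.F.obj a ⟶ d) (z : d ⟶ e) :
    S.xb a ≫ M ≫ z ⟶ S.xb a ≫ (S.ψ.app a ≫ M) ≫ z :=
  (λ_ (S.xb a ≫ M ≫ z)).inv
    ≫ (star2 (S.ε' a) ▷ (S.xb a ≫ M ≫ z))
    ≫ (α_ (S.xb a) (S.x a) (S.xb a ≫ M ≫ z)).hom
    ≫ (S.xb a ◁ (α_ (S.x a) (S.xb a) (M ≫ z)).inv)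
    ≫ (S.xb a ◁ (S.γ a ▷ (M ≫ z)))
    ≫ (S.xb a ◁ (α_ (S.ψ.app a) M z).inv)

theorem insertψ_naturality {a : C} {d e : D} {M N : S.F.obj a ⟶ d} (f : M ⟶ N)
    (z : d ⟶ e) :
    S.insertψ M z ≫ (S.xb a ◁ ((S.ψ.app a ◁ f) ▷ z)) = (S.xb a ◁ f ▷ z) ≫ S.insertψ N z := by
  calc S.insertψ M z ≫ (S.xb a ◁ ((S.ψ.app a ◁ f) ▷ z))
      = 𝟙 _ ⊗≫ star2 (S.ε' a) ▷ (S.xb a ≫ M ≫ z)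
          ⊗≫ S.xb a ◁ ((S.γ a ▷ M ≫ S.ψ.app a ◁ f) ▷ z) ⊗≫ 𝟙 _ := by
        simp only [insertψ]; bicategory
    _ = 𝟙 _
          ⊗≫ (star2 (S.ε' a) ▷ (S.xb a ≫ M ≫ z) ≫ (S.xb a ≫ S.x a) ◁ (S.xb a ◁ f ▷ z))
          ⊗≫ S.xb a ◁ (S.γ a ▷ N ▷ z) ⊗≫ 𝟙 _ := by
        rw [← whisker_exchange]; bicategory
    _ = (S.xb a ◁ f ▷ z) ≫ S.insertψ N z := by
        rw [← whisker_exchange]; simp only [insertψ]; bicategory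

def eraseψ {c : C} {d e : D} (w : e ⟶ d) (M : d ⟶ S.F.obj c) :
    w ≫ (M ≫ S.ψ.app c) ≫ S.x c ⟶ w ≫ M ≫ S.x c :=
  (w ◁ (α_ M (S.ψ.app c) (S.x c)).hom)
    ≫ (w ◁ (M ◁ (star2 (S.γ c) ▷ S.x c)))
    ≫ (w ◁ (M ◁ (α_ (S.x c) (S.xb c) (S.x c)).hom))
    ≫ (w ◁ (M ◁ (S.x c ◁ S.ε' c)))
    ≫ (w ◁ (M ◁ (ρ_ (S.x c)).hom))

theorem eraseψ_naturality {c : C} {d e : D} (w : e ⟶ d) {M N : d ⟶ S.F.obj c}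
    (f : M ⟶ N) :
    (w ◁ ((f ▷ S.ψ.app c) ▷ S.x c)) ≫ S.eraseψ w N = S.eraseψ w M ≫ (w ◁ f ▷ S.x c) := by
  calc (w ◁ ((f ▷ S.ψ.app c) ▷ S.x c)) ≫ S.eraseψ w N
      = 𝟙 _ ⊗≫ w ◁ (f ▷ (S.ψ.app c ≫ S.x c) ≫ N ◁ (star2 (S.γ c) ▷ S.x c))
          ⊗≫ w ◁ N ◁ S.x c ◁ S.ε' c ⊗≫ 𝟙 _ := by
        simp only [eraseψ]; bicategory
    _ = 𝟙 _ ⊗≫ w ◁ M ◁ (star2 (S.γ c) ▷ S.x c)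
          ⊗≫ w ◁ (f ▷ (S.x c ≫ S.xb c ≫ S.x c) ≫ N ◁ (S.x c ◁ S.ε' c)) ⊗≫ 𝟙 _ := by
        rw [← whisker_exchange]; bicategory
    _ = S.eraseψ w M ≫ (w ◁ f ▷ S.x c) := by
        rw [← whisker_exchange]; simp only [eraseψ]; bicategory

def compress {a c : C} {M : S.F.obj a ⟶ S.F.obj c} (θ : S.ψ.app a ≫ M ⟶ M ≫ S.ψ.app c) :
    S.xb a ≫ M ≫ S.x c ⟶ S.xb a ≫ M ≫ S.x c :=
  S.insertψ M (S.x c) ≫ (S.xb a ◁ θ ▷ S.x c) ≫ S.eraseψ (S.xb a) M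

theorem compress_naturality {a c : C} {M N : S.F.obj a ⟶ S.F.obj c} (f : M ⟶ N)
    {θ : S.ψ.app a ≫ M ⟶ M ≫ S.ψ.app c} {θ' : S.ψ.app a ≫ N ⟶ N ≫ S.ψ.app c}
    (h : θ ≫ (f ▷ S.ψ.app c) = (S.ψ.app a ◁ f) ≫ θ') :
    S.compress θ ≫ (S.xb a ◁ f ▷ S.x c) = (S.xb a ◁ f ▷ S.x c) ≫ S.compress θ' := by
  have h' : (S.xb a ◁ θ ▷ S.x c) ≫ (S.xb a ◁ (f ▷ S.ψ.app c) ▷ S.x c)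
      = (S.xb a ◁ (S.ψ.app a ◁ f) ▷ S.x c) ≫ (S.xb a ◁ θ' ▷ S.x c) := by
    rw [← whiskerLeft_comp, ← comp_whiskerRight, h, comp_whiskerRight, whiskerLeft_comp]
  simp only [compress, Category.assoc]
  rw [← eraseψ_naturality, reassoc_of% h', reassoc_of% insertψ_naturality]

theorem p_eq_compress {a b : C} (X : a ⟶ b) :
    S.p X = S.compress (star2 (S.ψ.natur X)) := by
  simp only [p, compress, insertψ, eraseψ, Category.assoc]

theorem p2_eq_compress {a b c : C} (X : a ⟶ b) (Y : b ⟶ c) :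
    S.p2 X Y = (S.xb a ◁ (α_ (S.F.map X) (S.F.map Y) (S.x c)).inv)
      ≫ S.compress (S.ψ.starNaturPair X Y)
      ≫ (S.xb a ◁ (α_ (S.F.map X) (S.F.map Y) (S.x c)).hom) := by
  simp only [p2, compress, insertψ, eraseψ, TransfData.starNaturPair]
  bicategory

end Setup

/-- In the standing setup, the projections `p_{X,Y}` and `p_{X⊠Y}`
are intertwined by the tensorator of `F`:
`(id ⊠ F²_{X,Y} ⊠ id) ∘ p_{X,Y} = p_{X⊠Y} ∘ (id ⊠ F²_{X,Y} ⊠ id)`. -/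
theorem p2_tensorator_natural
    {C : Type u₁} {D : Type u₂}
    [Bicategory.{w₁, v₁} C] [Bicategory.Strict C] [CStarStruct C]
    [Bicategory.{w₂, v₂} D] [Bicategory.Strict D] [CStarStruct D]
    (S : Setup C D) {a b c : C} (X : a ⟶ b) (Y : b ⟶ c) :
    S.p2 X Y
        ≫ (S.xb a ◁ ((α_ (S.F.map X) (S.F.map Y) (S.x c)).inv
            ≫ (S.F.tensorator X Y ▷ S.x c)))
      = (S.xb a ◁ ((α_ (S.F.map X) (S.F.map Y) (S.x c)).inv
            ≫ (S.F.tensorator X Y ▷ S.x c)))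
        ≫ S.p (X ≫ Y) := by
  have hT : IsUnitary (S.F.tensorator X Y) := S.hF.2.2.2.1 X Y
  have hslide := S.compress_naturality (S.F.tensorator X Y)
    (S.ψ.whiskerLeft_tensorator_comp_star_natur S.hψ X Y hT hT).symm
  rw [S.p2_eq_compress, S.p_eq_compress, whiskerLeft_comp]
  simp only [Category.assoc, ← whiskerLeft_comp_assoc, Iso.hom_inv_id, whiskerLeft_id,
    Category.id_comp, hslide]
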